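/- (Theorem 3.1, equation (3.9): macroscopic profile) Set α = tanh(βλ/2) and define M : [0, 1] \ {1/2} → ℝ by M(r) = −2αr for r ∈ [0, 1/2) and M(r) = 2α(1 − r) for r ∈ (1/2, 1]. Then for every r ∈ [0, 1] with r ≠ 1/2 and every ε > 0 there exists L > 4 such that for every ℓ > L and every stationary solution (j, m) on [0, ℓ], one has |m(rℓ) − M(r)| < ε. -/

import Mathlib

open Real Set

/-- The force profile `g(x) = ∫_{x-1}^x 1_{y ≤ ℓ/2} dy − ∫_x^{x+1} 1_{y ≤ ℓ/2} dy`. -/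
noncomputable def gfun (ℓ : ℝ) (x : ℝ) : ℝ :=
  (∫ y in (x - 1)..x, if y ≤ ℓ / 2 then (1 : ℝ) else 0) -
  (∫ y in x..(x + 1), if y ≤ ℓ / 2 then (1 : ℝ) else 0)

/-- An IVP solution with parameter `j`: a differentiable `m` on `[0, ℓ]` with `m 0 = 0`
and `m'(x) = -2j + βλ(1 - m(x)²) g(x)` on `[0, ℓ]`. -/
def IsIVPSolution (β lam ℓ j : ℝ) (m : ℝ → ℝ) : Prop :=
  m 0 = 0 ∧ ∀ x ∈ Icc (0 : ℝ) ℓ,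
    HasDerivAt m (-2 * j + β * lam * (1 - m x ^ 2) * gfun ℓ x) x

/-- A stationary solution: an IVP solution which also satisfies `m ℓ = 0`. -/
def IsStationarySolution (β lam ℓ j : ℝ) (m : ℝ → ℝ) : Prop :=
  IsIVPSolution β lam ℓ j m ∧ m ℓ = 0

/-- The macroscopic profile `M` of (3.9), with `α = tanh(βλ/2)`. -/
noncomputable def Mprof (β lam : ℝ) (r : ℝ) : ℝ :=
  if r < 1 / 2 then -2 * Real.tanh (β * lam / 2) * r
  else 2 * Real.tanh (β * lam / 2) * (1 - r)

/-!
Away from the bump `[ℓ/2 - 1, ℓ/2 + 1]` carrying `g`, the equation reads `m' = -2j`, so `m` is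
linear there and `m(ℓ/2 ∓ 1) = ∓c` with `c = j(ℓ - 2)`; the profile is then governed by
`jℓ = c + 2j`. Comparison arguments (using the symmetry `m ↦ -m(ℓ - ·)`) show `j ≥ 0` and keep
`m` a fixed distance `e^{-8βλ}` away from `±1` on the bump. There `artanh m` has derivative
`βλ g - 2j/(1 - m²)`, and `∫ g = 1`, so `2 artanh c = βλ + O(j)`. Since `c < 1` forces
`j = O(1/ℓ)`, both `c` and `jℓ` are within `O(1/ℓ)` of `tanh(βλ/2)`.
-/

open MeasureTheory

theorem integral_ite_le_eq (c u v : ℝ) :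
    ∫ y in u..v, (if y ≤ c then (1 : ℝ) else 0) = min v c - min u c := by
  have hint : ∀ p q : ℝ,
      IntervalIntegrable (fun y : ℝ => if y ≤ c then (1 : ℝ) else 0) volume p q :=
    fun p q => Antitone.intervalIntegrable fun x y hxy => by
      by_cases hy : y ≤ c <;> simp [hy, hxy.trans, ite_nonneg]
  have from_c : ∀ x, ∫ y in c..x, (if y ≤ c then (1 : ℝ) else 0) = min x c - c := by
    intro x
    rcases le_total c x with h | h
    · simpa [indicator, min_eq_right h] using
        intervalIntegral.integral_indicator (f := fun _ => (1 : ℝ)) (μ := volume)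
          ⟨le_rfl, h⟩
    · rw [intervalIntegral.integral_symm, intervalIntegral.integral_congr (g := fun _ => (1 : ℝ))
        fun y hy => if_pos (by rw [uIcc_of_le h] at hy; exact hy.2)]
      simp [min_eq_left h]
  rw [← intervalIntegral.integral_interval_sub_left (hint c v) (hint c u), from_c, from_c]
  ring

theorem gfun_eq_min (ℓ x : ℝ) :
    gfun ℓ x = 2 * min x (ℓ / 2) - min (x - 1) (ℓ / 2) - min (x + 1) (ℓ / 2) := by
  rw [gfun, integral_ite_le_eq, integral_ite_le_eq]
  ring

theorem continuous_gfun (ℓ : ℝ) : Continuous (gfun ℓ) := by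
  simp_rw [funext (gfun_eq_min ℓ)]
  fun_prop

theorem gfun_nonneg (ℓ x : ℝ) : 0 ≤ gfun ℓ x := by
  rw [gfun_eq_min]; simp only [min_def]; split_ifs <;> linarith

theorem gfun_le_one (ℓ x : ℝ) : gfun ℓ x ≤ 1 := by
  rw [gfun_eq_min]; simp only [min_def]; split_ifs <;> linarith

theorem gfun_eq_zero_of_add_one_le {ℓ x : ℝ} (h : x + 1 ≤ ℓ / 2) : gfun ℓ x = 0 := by
  rw [gfun_eq_min]; simp only [min_def]; split_ifs <;> linarith

theorem gfun_self_sub (ℓ x : ℝ) : gfun ℓ (ℓ - x) = gfun ℓ x := by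
  rw [gfun_eq_min, gfun_eq_min]; simp only [min_def]; split_ifs <;> linarith

theorem integral_gfun (ℓ : ℝ) : ∫ x in (ℓ / 2 - 1)..(ℓ / 2 + 1), gfun ℓ x = 1 := by
  have hint : ∀ p q, IntervalIntegrable (gfun ℓ) volume p q :=
    fun p q => (continuous_gfun ℓ).intervalIntegrable p q
  have left : ∫ x in (ℓ / 2 - 1)..(ℓ / 2), gfun ℓ x =
      ∫ x in (ℓ / 2 - 1)..(ℓ / 2), (x - (ℓ / 2 - 1)) := by
    refine intervalIntegral.integral_congr fun x hx => ?_
    rw [uIcc_of_le (by linarith)] at hx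
    rw [gfun_eq_min]; simp only [min_def]; split_ifs <;> linarith [hx.1, hx.2]
  have right : ∫ x in (ℓ / 2)..(ℓ / 2 + 1), gfun ℓ x =
      ∫ x in (ℓ / 2)..(ℓ / 2 + 1), ((ℓ / 2 + 1) - x) := by
    refine intervalIntegral.integral_congr fun x hx => ?_
    rw [uIcc_of_le (by linarith)] at hx
    rw [gfun_eq_min]; simp only [min_def]; split_ifs <;> linarith [hx.1, hx.2]
  rw [← intervalIntegral.integral_add_adjacent_intervals (hint _ (ℓ / 2)) (hint _ _), left, right,
    intervalIntegral.integral_comp_sub_right (fun x => x),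
    intervalIntegral.integral_comp_sub_left (fun x => x)]
  simp only [integral_id]
  ring

theorem Real.hasDerivAt_tanh (x : ℝ) : HasDerivAt tanh (1 - tanh x ^ 2) x := by
  have h : HasDerivAt (fun y => sinh y / cosh y) (1 - tanh x ^ 2) x :=
    ((hasDerivAt_sinh x).div (hasDerivAt_cosh x) (cosh_pos x).ne').congr_deriv (by
      rw [tanh_eq_sinh_div_cosh]
      field_simp)
  simpa only [← tanh_eq_sinh_div_cosh] using h

theorem Real.abs_tanh_sub_tanh_le (x y : ℝ) : |tanh x - tanh y| ≤ |x - y| := by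
  simpa using Convex.norm_image_sub_le_of_norm_hasDerivWithin_le (s := univ) (C := 1)
    (fun z _ => (hasDerivAt_tanh z).hasDerivWithinAt)
    (fun z _ => by
      rw [Real.norm_eq_abs, abs_of_pos (by linarith [tanh_sq_lt_one z])]
      linarith [sq_nonneg (tanh z)])
    convex_univ (mem_univ y) (mem_univ x)

theorem Real.artanh_neg_eq_neg_artanh (x : ℝ) : artanh (-x) = -artanh x := by
  rw [artanh, artanh, show (1 + -x) / (1 - -x) = ((1 + x) / (1 - x))⁻¹ by rw [inv_div]; ring,
    sqrt_inv, log_inv]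

theorem Real.hasDerivAt_artanh {x : ℝ} (hx : x ∈ Ioo (-1) 1) :
    HasDerivAt artanh (1 - x ^ 2)⁻¹ x := by
  have h1 : 0 < 1 + x := by linarith [hx.1]
  have h2 : 0 < 1 - x := by linarith [hx.2]
  have hlog : HasDerivAt (fun y => 1 / 2 * log ((1 + y) / (1 - y))) (1 - x ^ 2)⁻¹ x :=
    ((((hasDerivAt_id x).const_add 1).div ((hasDerivAt_id x).const_sub 1) h2.ne').log
      (div_pos h1 h2).ne').const_mul (1 / 2) |>.congr_deriv (by
        have h3 : 1 - x ^ 2 ≠ 0 := by nlinarith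
        simp only [id, Pi.div_apply]
        field_simp
        ring)
  refine hlog.congr_of_eventuallyEq ?_
  filter_upwards [Ioo_mem_nhds hx.1 hx.2] with y hy
  exact artanh_eq_half_log (Ioo_subset_Icc_self hy)

theorem HasDerivAt.artanh {f : ℝ → ℝ} {f' x : ℝ} (hf : HasDerivAt f f' x)
    (hx : f x ∈ Ioo (-1) 1) :
    HasDerivAt (fun y => artanh (f y)) (f' / (1 - f x ^ 2)) x :=
  ((hasDerivAt_artanh hx).comp x hf).congr_deriv (by rw [div_eq_mul_inv, mul_comm])

section Riccati

variable {A j a b : ℝ} {g m : ℝ → ℝ}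

theorem nonneg_of_riccati (hm : ∀ x ∈ Icc a b, HasDerivAt m (-2 * j + A * (1 - m x ^ 2) * g x) x)
    (hj : j < 0) (hA : 0 ≤ A) (hg : ∀ x ∈ Icc a b, 0 ≤ g x) (ha : 0 ≤ m a) :
    ∀ x ∈ Icc a b, 0 ≤ m x := by
  have key := image_le_of_deriv_right_lt_deriv_boundary (a := a) (b := b) (f := fun x => -m x)
    (HasDerivAt.continuousOn hm).neg
    (fun x hx => (hm x (Ico_subset_Icc_self hx)).neg.hasDerivWithinAt)
    (B := fun _ => 0) (by simpa using ha) (fun _ => hasDerivAt_const _ _)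
    (fun x hx hmx => by
      have := hg x (Ico_subset_Icc_self hx)
      rw [neg_eq_zero] at hmx
      rw [hmx]; nlinarith)
  exact fun x hx => neg_nonpos.mp (key hx)

/-- As `(1 + m) g ≤ 2`, the distance of `m` to `1` decays at most at rate `2A`, so the barrier
`1 - (1 - m a) e^{-4A(x-a)}` is never reached from below. -/
theorem one_sub_ge_of_riccati
    (hm : ∀ x ∈ Icc a b, HasDerivAt m (-2 * j + A * (1 - m x ^ 2) * g x) x)
    (hj : 0 ≤ j) (hA : 0 < A) (hg₀ : ∀ x ∈ Icc a b, 0 ≤ g x) (hg₁ : ∀ x ∈ Icc a b, g x ≤ 1)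
    (ha : m a < 1) : ∀ x ∈ Icc a b, (1 - m a) * exp (-(4 * A * (x - a))) ≤ 1 - m x := by
  set E : ℝ → ℝ := fun x => (1 - m a) * exp (-(4 * A * (x - a)))
  have hE : ∀ x, HasDerivAt (fun y => 1 - E y) (4 * A * E x) x := fun x => by
    have := ((((hasDerivAt_id x).sub_const a).const_mul (4 * A)).neg.exp.const_mul
      (1 - m a)).const_sub 1
    exact this.congr_deriv (by simp only [E, Pi.neg_apply, id]; ring)
  have key := image_le_of_deriv_right_lt_deriv_boundary (a := a) (b := b)
    (HasDerivAt.continuousOn hm) (fun x hx => (hm x (Ico_subset_Icc_self hx)).hasDerivWithinAt)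
    (by simp [E]) hE
    (fun x hx hmx => by
      have hEpos : 0 < E x := by positivity
      have hg0 := hg₀ x (Ico_subset_Icc_self hx)
      have hg1 := hg₁ x (Ico_subset_Icc_self hx)
      have hmE : 1 - m x = E x := by rw [hmx]; ring
      have hprod : (1 + m x) * g x ≤ 2 := by nlinarith
      have : A * (1 - m x) * ((1 + m x) * g x) ≤ A * (1 - m x) * 2 :=
        mul_le_mul_of_nonneg_left hprod (by rw [hmE]; positivity)
      nlinarith)
  exact fun x hx => by linarith [key hx]

theorem artanh_sub_artanh_mem_of_riccati
    (hm : ∀ x ∈ Icc a b, HasDerivAt m (-2 * j + A * (1 - m x ^ 2) * g x) x)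
    (hab : a ≤ b) (hj : 0 ≤ j) {δ : ℝ} (hδ : 0 < δ) (hmδ : ∀ x ∈ Icc a b, δ ≤ 1 - m x ^ 2)
    (hg : IntervalIntegrable g volume a b) :
    artanh (m b) - artanh (m a) ∈
      Icc (A * (∫ x in a..b, g x) - 2 * j / δ * (b - a)) (A * ∫ x in a..b, g x) := by
  have hpos : ∀ x ∈ Icc a b, 0 < 1 - m x ^ 2 := fun x hx => hδ.trans_le (hmδ x hx)
  have hq : ∀ x ∈ Icc a b,
      HasDerivAt (fun y => artanh (m y)) (A * g x - 2 * j / (1 - m x ^ 2)) x := fun x hx =>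
    ((hm x hx).artanh (by
      have := hpos x hx
      constructor <;> nlinarith)).congr_deriv (by field_simp [(hpos x hx).ne']; ring)
  have hcont : ContinuousOn (fun y => artanh (m y)) (Icc a b) := HasDerivAt.continuousOn hq
  have hderiv : ∀ x ∈ Ioo a b, HasDerivWithinAt (fun y => artanh (m y))
      (A * g x - 2 * j / (1 - m x ^ 2)) (Ioi x) x :=
    fun x hx => (hq x (Ioo_subset_Icc_self hx)).hasDerivWithinAt
  have hAg := hg.const_mul A
  have hAg' := (intervalIntegrable_iff_integrableOn_Icc_of_le hab).mp hAg
  constructor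
  · have := intervalIntegral.integral_le_sub_of_hasDeriv_right_of_le hab hcont hderiv
      (hAg'.sub (integrableOn_const measure_Icc_lt_top.ne))
      (φ := fun x => A * g x - 2 * j / δ) fun x hx => by
        have := div_le_div_of_nonneg_left (by linarith : 0 ≤ 2 * j) hδ
          (hmδ x (Ioo_subset_Icc_self hx))
        linarith
    rwa [intervalIntegral.integral_sub hAg intervalIntegrable_const,
      intervalIntegral.integral_const_mul, intervalIntegral.integral_const, smul_eq_mul,
      mul_comm (b - a)] at this
  · have := intervalIntegral.sub_le_integral_of_hasDeriv_right_of_le hab hcont hderiv hAg'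
      fun x hx => by
        have := div_nonneg (by linarith : 0 ≤ 2 * j) (hpos x (Ioo_subset_Icc_self hx)).le
        linarith
    rwa [intervalIntegral.integral_const_mul] at this

end Riccati

section Stationary

variable {β lam ℓ j : ℝ} {m : ℝ → ℝ}

theorem IsStationarySolution.reflect (h : IsStationarySolution β lam ℓ j m) :
    IsStationarySolution β lam ℓ j (fun x => -m (ℓ - x)) := by
  obtain ⟨⟨h0, hder⟩, hℓ⟩ := h
  refine ⟨⟨by simp [hℓ], fun x hx => ?_⟩, by simp [h0]⟩
  have hx' : ℓ - x ∈ Icc 0 ℓ := ⟨by linarith [hx.2], by linarith [hx.1]⟩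
  refine (((hder _ hx').comp x ((hasDerivAt_id x).const_sub ℓ)).neg).congr_deriv ?_
  rw [gfun_self_sub]
  ring

theorem IsIVPSolution.apply_eq_of_mem_left (h : IsIVPSolution β lam ℓ j m) {x : ℝ}
    (hx : x ∈ Icc 0 (ℓ / 2 - 1)) : m x = -2 * j * x := by
  have hsub : Icc 0 (ℓ / 2 - 1) ⊆ Icc 0 ℓ := Icc_subset_Icc_right (by linarith [hx.1, hx.2])
  refine eq_of_has_deriv_right_eq (f' := fun _ => -2 * j) (fun y hy => ?_)
    (fun y _ => (((hasDerivAt_id y).const_mul (-2 * j)).congr_deriv (mul_one _)).hasDerivWithinAt)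
    (HasDerivAt.continuousOn fun y hy => h.2 y (hsub hy)) (by fun_prop) (by simp [h.1]) x hx
  have := h.2 y (hsub (Ico_subset_Icc_self hy))
  rw [gfun_eq_zero_of_add_one_le (by linarith [hy.2]), mul_zero, add_zero] at this
  exact this.hasDerivWithinAt

theorem IsStationarySolution.apply_eq_of_mem_right (h : IsStationarySolution β lam ℓ j m) {x : ℝ}
    (hx : x ∈ Icc (ℓ / 2 + 1) ℓ) : m x = 2 * j * (ℓ - x) := by
  have := h.reflect.1.apply_eq_of_mem_left (x := ℓ - x) ⟨by linarith [hx.2], by linarith [hx.1]⟩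
  rw [sub_sub_cancel] at this
  linarith

theorem IsStationarySolution.hasDerivAt_of_mem_bump (h : IsStationarySolution β lam ℓ j m)
    (hℓ : 2 < ℓ) : ∀ x ∈ Icc (ℓ / 2 - 1) (ℓ / 2 + 1),
      HasDerivAt m (-2 * j + β * lam * (1 - m x ^ 2) * gfun ℓ x) x :=
  fun x hx => h.1.2 x (Icc_subset_Icc (by linarith) (by linarith) hx)

theorem IsStationarySolution.current_nonneg (h : IsStationarySolution β lam ℓ j m) (hℓ : 2 < ℓ)
    (hA : 0 ≤ β * lam) : 0 ≤ j := by
  by_contra! hj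
  have hma := h.1.apply_eq_of_mem_left (x := ℓ / 2 - 1) ⟨by linarith, le_rfl⟩
  have hmb := h.apply_eq_of_mem_right (x := ℓ / 2 + 1) ⟨le_rfl, by linarith⟩
  have := nonneg_of_riccati (h.hasDerivAt_of_mem_bump hℓ) hj hA (fun x _ => gfun_nonneg ℓ x)
    (by rw [hma]; nlinarith) (ℓ / 2 + 1) ⟨by linarith, le_rfl⟩
  nlinarith

theorem IsStationarySolution.exp_le_one_sub (h : IsStationarySolution β lam ℓ j m) (hℓ : 2 < ℓ)
    (hA : 0 < β * lam) :
    ∀ x ∈ Icc (ℓ / 2 - 1) (ℓ / 2 + 1), exp (-(8 * (β * lam))) ≤ 1 - m x := by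
  intro x hx
  have hj := h.current_nonneg hℓ hA.le
  have hma := h.1.apply_eq_of_mem_left (x := ℓ / 2 - 1) ⟨by linarith, le_rfl⟩
  have hma1 : 1 ≤ 1 - m (ℓ / 2 - 1) := by rw [hma]; nlinarith
  have hbarrier := one_sub_ge_of_riccati (h.hasDerivAt_of_mem_bump hℓ) hj hA
    (fun x _ => gfun_nonneg ℓ x) (fun x _ => gfun_le_one ℓ x) (by linarith) x hx
  have hexp : exp (-(8 * (β * lam))) ≤ exp (-(4 * (β * lam) * (x - (ℓ / 2 - 1)))) :=
    exp_le_exp.2 (by nlinarith [hx.2])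
  nlinarith [exp_pos (-(4 * (β * lam) * (x - (ℓ / 2 - 1))))]

theorem IsStationarySolution.exp_le_one_sub_sq (h : IsStationarySolution β lam ℓ j m)
    (hℓ : 2 < ℓ) (hA : 0 < β * lam) :
    ∀ x ∈ Icc (ℓ / 2 - 1) (ℓ / 2 + 1), exp (-(8 * (β * lam))) ≤ 1 - m x ^ 2 := by
  intro x hx
  have h₁ := h.exp_le_one_sub hℓ hA x hx
  have h₂ := h.reflect.exp_le_one_sub hℓ hA (ℓ - x) ⟨by linarith [hx.2], by linarith [hx.1]⟩
  rw [sub_sub_cancel, sub_neg_eq_add] at h₂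
  have hε : exp (-(8 * (β * lam))) ≤ 1 := exp_le_one_iff.2 (by linarith)
  nlinarith [mul_nonneg (sub_nonneg.2 h₁) (sub_nonneg.2 h₂),
    mul_nonneg (exp_pos (-(8 * (β * lam)))).le (sub_nonneg.2 hε)]

theorem IsStationarySolution.abs_mul_sub_tanh_le (h : IsStationarySolution β lam ℓ j m)
    (hℓ : 2 < ℓ) (hA : 0 < β * lam) :
    |j * ℓ - tanh (β * lam / 2)| ≤ 2 * (exp (8 * (β * lam)) + 1) / (ℓ - 2) := by
  set A := β * lam
  set c := 2 * j * (ℓ / 2 - 1) with hc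
  have hj := h.current_nonneg hℓ hA.le
  have hma : m (ℓ / 2 - 1) = -c := by
    rw [h.1.apply_eq_of_mem_left ⟨by linarith, le_rfl⟩]; ring
  have hmb : m (ℓ / 2 + 1) = c := by
    rw [h.apply_eq_of_mem_right ⟨le_rfl, by linarith⟩]; ring
  have hmδ := h.exp_le_one_sub_sq hℓ hA
  have hc1 : c ∈ Ioo (-1) 1 := by
    have := hmδ (ℓ / 2 + 1) ⟨by linarith, le_rfl⟩
    rw [hmb] at this
    constructor <;> nlinarith [exp_pos (-(8 * A))]
  obtain ⟨hlower, hupper⟩ := artanh_sub_artanh_mem_of_riccati (h.hasDerivAt_of_mem_bump hℓ)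
    (by linarith) hj (exp_pos _) hmδ ((continuous_gfun ℓ).intervalIntegrable _ _)
  rw [integral_gfun, hma, hmb, artanh_neg_eq_neg_artanh] at hlower hupper
  rw [div_eq_mul_inv, ← exp_neg, neg_neg] at hlower
  have hclose : |c - tanh (A / 2)| ≤ 2 * j * exp (8 * A) :=
    calc |c - tanh (A / 2)| = |tanh (artanh c) - tanh (A / 2)| := by rw [tanh_artanh hc1]
      _ ≤ |artanh c - A / 2| := abs_tanh_sub_tanh_le _ _
      _ ≤ 2 * j * exp (8 * A) := abs_le.2 ⟨by nlinarith, by nlinarith [exp_pos (8 * A)]⟩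
  have hjℓ : j * (ℓ - 2) ≤ 1 := by linarith [hc1.2]
  rw [le_div_iff₀ (by linarith)]
  have hsplit : j * ℓ - tanh (A / 2) = (c - tanh (A / 2)) + 2 * j := by rw [hc]; ring
  calc |j * ℓ - tanh (A / 2)| * (ℓ - 2) ≤ (|c - tanh (A / 2)| + |2 * j|) * (ℓ - 2) := by
        rw [hsplit]; gcongr; exact abs_add_le _ _
    _ ≤ (2 * j * exp (8 * A) + 2 * j) * (ℓ - 2) := by
        rw [abs_of_nonneg (show (0 : ℝ) ≤ 2 * j by linarith)]; gcongr
    _ = 2 * (exp (8 * A) + 1) * (j * (ℓ - 2)) := by ring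
    _ ≤ 2 * (exp (8 * A) + 1) := by
        nlinarith [exp_pos (8 * A), mul_nonneg hj (by linarith : (0 : ℝ) ≤ ℓ - 2)]

theorem IsStationarySolution.abs_sub_Mprof_le (h : IsStationarySolution β lam ℓ j m) {r : ℝ}
    (hr : r ∈ Icc 0 1) (hrℓ : 1 ≤ |r - 1 / 2| * ℓ) :
    |m (r * ℓ) - Mprof β lam r| ≤ 2 * |j * ℓ - tanh (β * lam / 2)| := by
  have hℓ : 0 < ℓ := by
    by_contra! hℓ
    nlinarith [abs_nonneg (r - 1 / 2)]
  have hdev := abs_nonneg (j * ℓ - tanh (β * lam / 2))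
  rcases lt_or_ge r (1 / 2) with hlt | hge
  · rw [abs_of_neg (by linarith)] at hrℓ
    rw [h.1.apply_eq_of_mem_left ⟨by nlinarith [hr.1], by nlinarith⟩, Mprof, if_pos hlt,
      show -2 * j * (r * ℓ) - -2 * tanh (β * lam / 2) * r
        = -(2 * r) * (j * ℓ - tanh (β * lam / 2)) by ring,
      abs_mul, abs_neg, abs_of_nonneg (by linarith [hr.1])]
    nlinarith
  · rw [abs_of_nonneg (by linarith)] at hrℓ
    rw [h.apply_eq_of_mem_right ⟨by nlinarith, by nlinarith [hr.2]⟩, Mprof, if_neg (not_lt.2 hge),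
      show 2 * j * (ℓ - r * ℓ) - 2 * tanh (β * lam / 2) * (1 - r)
        = 2 * (1 - r) * (j * ℓ - tanh (β * lam / 2)) by ring,
      abs_mul, abs_of_nonneg (by linarith [hr.2])]
    nlinarith [hr.1]

end Stationary

/-- Theorem 3.1, (3.9): as `l → ∞` the profile in macroscopic variables converges to `M`. -/
theorem stationary_macroscopic_limit (β lam : ℝ) (hβ : 0 < β) (hlam : 0 < lam) :
    ∀ r ∈ Icc (0 : ℝ) 1, r ≠ 1 / 2 → ∀ ε > (0 : ℝ), ∃ L > (4 : ℝ), ∀ ℓ > L,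
      ∀ j : ℝ, ∀ m : ℝ → ℝ, IsStationarySolution β lam ℓ j m →
        |m (r * ℓ) - Mprof β lam r| < ε := by
  intro r hr hr2 ε hε
  set K := 4 * (exp (8 * (β * lam)) + 1)
  have hd : 0 < |r - 1 / 2| := abs_pos.2 (sub_ne_zero.2 hr2)
  refine ⟨max 5 (max (1 / |r - 1 / 2|) (K / ε + 2)), by norm_num, fun ℓ hℓ j m h => ?_⟩
  simp only [gt_iff_lt, max_lt_iff] at hℓ
  obtain ⟨hℓ5, hℓr, hℓε⟩ := hℓ
  rw [div_lt_iff₀ hd] at hℓr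
  rw [div_add' _ _ _ hε.ne', div_lt_iff₀ hε] at hℓε
  calc |m (r * ℓ) - Mprof β lam r| ≤ 2 * |j * ℓ - tanh (β * lam / 2)| :=
        h.abs_sub_Mprof_le hr (by linarith)
    _ ≤ 2 * (2 * (exp (8 * (β * lam)) + 1) / (ℓ - 2)) := by
        gcongr
        exact h.abs_mul_sub_tanh_le (by linarith) (mul_pos hβ hlam)
    _ = K / (ℓ - 2) := by ring
    _ < ε := by rw [div_lt_iff₀ (by linarith)]; linarith
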